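/- Let F : D → ℝ^m be differentiable with (J_F(0) | F(0))ᵗ ∈ Mat_{(n+1)×m}(ℝ) admitting a rank-revealing factorization (J_F(0)ᵗ; F(0)ᵗ) = (Q₁|Q₂)[[R₁₁,R₁₂],[0,R₂₂]] (take Π = I), with R₁₁ ∈ Mat_r(ℝ) invertible. Define G = R₁₂ᵗR₁₁^{−t} and let F₁, F₂ be the first r and last m−r components of F, and d = GF₁ − F₂. Then (J_d(0) | d(0)) = −R₂₂ᵗQ₂ᵗ, and consequently ‖J_d(0)‖₂ ≤ ‖R₂₂‖₂ and ‖d(0)‖₂ ≤ ‖R₂₂‖₂. -/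

import Mathlib

/-!
Multiplying the first block row of the factorization by `G = R₁₂ᵗ R₁₁⁻ᵗ` reproduces the
`R₁₂ᵗ Q₁ᵗ` term of the second block row, so it cancels in
`(J_d | d) = G (J_{F₁} | F₁) - (J_{F₂} | F₂)`, leaving `-R₂₂ᵗ Q₂ᵗ`.

The spectral norm `specNorm A`, the square root of the largest eigenvalue of `AᵗA`, is the
`ℓ²` operator norm: by the spectral theorem the operator norm of a Hermitian matrix is its
largest absolute eigenvalue, and `‖AᴴA‖ = ‖A‖²`. Both bounds then follow because `J_d(0)` is a
column block and `d(0)` a column of `-R₂₂ᵗ Q₂ᵗ`, and `Q₂ᵗ` has operator norm at most `1`.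
-/

open Matrix

noncomputable def kthLargest {m : Type*} [Fintype m] (f : m → ℝ) (j : ℕ) : ℝ :=
  let c := Fintype.card m
  let g : Fin c → ℝ := f ∘ (Fintype.equivFin m).symm
  if h : c - j < c then (g ∘ Tuple.sort g) ⟨c - j, h⟩ else 0

noncomputable def singularValue {m n : Type*} [Fintype m] [Fintype n] [DecidableEq n]
    (A : Matrix m n ℝ) (j : ℕ) : ℝ :=
  Real.sqrt (kthLargest (show (Aᵀ * A).IsHermitian by
    simpa [Matrix.conjTranspose_eq_transpose_of_trivial] using
      Matrix.isHermitian_conjTranspose_mul_self A).eigenvalues j)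

noncomputable def specNorm {m n : Type*} [Fintype m] [Fintype n] [DecidableEq n]
    (A : Matrix m n ℝ) : ℝ := singularValue A 1

noncomputable def vec2 {n : Type*} [Fintype n] (v : n → ℝ) : ℝ :=
  Real.sqrt (∑ i, v i ^ 2)

open scoped Matrix.Norms.L2Operator

namespace Matrix

section L2OpNorm

variable {𝕜 : Type*} [RCLike 𝕜] {l m n : Type*} [Fintype l] [Fintype m] [Fintype n]

lemma l2_opNorm_le_one_of_conjTranspose_mul_self_eq_one [DecidableEq n] {Q : Matrix m n 𝕜}
    (hQ : Qᴴ * Q = 1) : ‖Q‖ ≤ 1 := by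
  have hone : ‖(1 : Matrix n n 𝕜)‖ ≤ 1 := by
    rw [← diagonal_one, l2_opNorm_diagonal]
    exact (pi_norm_le_iff_of_nonneg zero_le_one).mpr fun _ => by simp
  have hsq := l2_opNorm_conjTranspose_mul_self Q
  rw [hQ] at hsq
  nlinarith [norm_nonneg Q]

lemma l2_opNorm_mul_conjTranspose_le [DecidableEq m] [DecidableEq n] (A : Matrix l n 𝕜)
    {Q : Matrix m n 𝕜} (hQ : Qᴴ * Q = 1) : ‖A * Qᴴ‖ ≤ ‖A‖ :=
  calc ‖A * Qᴴ‖ ≤ ‖A‖ * ‖Qᴴ‖ := l2_opNorm_mul _ _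
    _ ≤ ‖A‖ := by
      rw [l2_opNorm_conjTranspose]
      exact mul_le_of_le_one_right (norm_nonneg _)
        (l2_opNorm_le_one_of_conjTranspose_mul_self_eq_one hQ)

lemma l2_opNorm_le_l2_opNorm_fromCols_left [DecidableEq n] [DecidableEq l]
    (A : Matrix m n 𝕜) (B : Matrix m l 𝕜) : ‖A‖ ≤ ‖fromCols A B‖ := by
  set E : Matrix (n ⊕ l) n 𝕜 := fromRows 1 0
  have hE : Eᴴ * E = 1 := by
    simp [E, conjTranspose_fromRows_eq_fromCols_conjTranspose, fromCols_mul_fromRows]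
  calc ‖A‖ = ‖fromCols A B * E‖ := by simp [E, fromCols_mul_fromRows]
    _ ≤ ‖fromCols A B‖ * ‖E‖ := l2_opNorm_mul _ _
    _ ≤ ‖fromCols A B‖ :=
      mul_le_of_le_one_right (norm_nonneg _)
        (l2_opNorm_le_one_of_conjTranspose_mul_self_eq_one hE)

lemma norm_toLp_col_le_l2_opNorm [DecidableEq n] (A : Matrix m n 𝕜) (j : n) :
    ‖WithLp.toLp 2 (A.col j)‖ ≤ ‖A‖ := by
  simpa [mulVec_single_one] using l2_opNorm_mulVec A (EuclideanSpace.single j 1)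

lemma IsHermitian.l2_opNorm_eq_norm_eigenvalues [DecidableEq n] {A : Matrix n n 𝕜}
    (hA : A.IsHermitian) : ‖A‖ = ‖hA.eigenvalues‖ := by
  conv_lhs => rw [hA.spectral_theorem]
  rw [Unitary.conjStarAlgAut_apply, ← Unitary.coe_star, CStarRing.norm_mul_coe_unitary,
    CStarRing.norm_coe_unitary_mul, l2_opNorm_diagonal]
  simp [Pi.norm_def]

end L2OpNorm

lemma fromCols_mul_sub_replicateCol {R : Type*} [Ring R] {ι k m n : Type*} [Fintype k]
    {G : Matrix m k R} {J₁ : Matrix k n R} {J₂ : Matrix m n R} {f₁ : k → R} {f₂ : m → R}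
    {M₁ : Matrix k (n ⊕ ι) R} {M₂ : Matrix m (n ⊕ ι) R}
    (h₁ : fromCols J₁ (replicateCol ι f₁) = M₁) (h₂ : fromCols J₂ (replicateCol ι f₂) = M₂) :
    fromCols (G * J₁ - J₂) (replicateCol ι (G *ᵥ f₁ - f₂)) = G * M₁ - M₂ := by
  subst h₁ h₂
  ext i (j | j) <;> simp [mul_apply, mulVec, dotProduct, replicateCol_apply]

end Matrix

section SpectralNorm

variable {m n : Type*} [Fintype m] [Fintype n]

lemma le_kthLargest_one (f : m → ℝ) (j : m) : f j ≤ kthLargest f 1 := by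
  have hlt : Fintype.card m - 1 < Fintype.card m :=
    Nat.sub_lt (Fintype.card_pos_iff.mpr ⟨j⟩) one_pos
  set g : Fin (Fintype.card m) → ℝ := f ∘ (Fintype.equivFin m).symm
  have hj : f j = (g ∘ Tuple.sort g) ((Tuple.sort g)⁻¹ (Fintype.equivFin m j)) := by simp [g]
  rw [kthLargest, dif_pos hlt, hj]
  exact Tuple.monotone_sort g (Fin.le_def.mpr (Nat.le_sub_one_of_lt (Fin.is_lt _)))

lemma kthLargest_one_le_norm (f : m → ℝ) : kthLargest f 1 ≤ ‖f‖ := by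
  dsimp only [kthLargest]
  split_ifs
  · exact (le_abs_self _).trans (norm_le_pi_norm f _)
  · exact norm_nonneg f

lemma kthLargest_one_eq_norm {f : m → ℝ} (hf : 0 ≤ f) : kthLargest f 1 = ‖f‖ := by
  refine le_antisymm (kthLargest_one_le_norm f) ?_
  rcases isEmpty_or_nonempty m with hm | hm
  · simp [Subsingleton.elim f 0, kthLargest]
  · refine (pi_norm_le_iff_of_nonempty f).mpr fun i => ?_
    rw [Real.norm_of_nonneg (hf i)]
    exact le_kthLargest_one f i

lemma specNorm_eq_l2_opNorm [DecidableEq n] (A : Matrix m n ℝ) : specNorm A = ‖A‖ := by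
  have hA : (Aᵀ * A).PosSemidef := by
    simpa [conjTranspose_eq_transpose_of_trivial] using posSemidef_conjTranspose_mul_self A
  rw [specNorm, singularValue, kthLargest_one_eq_norm hA.eigenvalues_nonneg,
    ← hA.isHermitian.l2_opNorm_eq_norm_eigenvalues, ← conjTranspose_eq_transpose_of_trivial,
    l2_opNorm_conjTranspose_mul_self, Real.sqrt_mul_self (norm_nonneg A)]

lemma vec2_eq_norm (v : n → ℝ) : vec2 v = ‖WithLp.toLp 2 v‖ := by
  simp [vec2, EuclideanSpace.norm_eq]

end SpectralNorm

theorem rank_revealed_difference_matrix_general {n r u : ℕ}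
    (JF1 : Matrix (Fin r) (Fin n) ℝ) (F10 : Fin r → ℝ)
    (JF2 : Matrix (Fin u) (Fin n) ℝ) (F20 : Fin u → ℝ)
    (Q1 : Matrix (Fin n ⊕ Fin 1) (Fin r) ℝ) (Q2 : Matrix (Fin n ⊕ Fin 1) (Fin u) ℝ)
    (R11 : Matrix (Fin r) (Fin r) ℝ) (R12 : Matrix (Fin r) (Fin u) ℝ)
    (R22 : Matrix (Fin u) (Fin u) ℝ)
    (horth2 : Q2ᵀ * Q2 = 1)
    (hR11 : IsUnit R11.det)
    (h1 : Matrix.fromCols JF1 (Matrix.of fun i (_ : Fin 1) => F10 i) = R11ᵀ * Q1ᵀ)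
    (h2 : Matrix.fromCols JF2 (Matrix.of fun i (_ : Fin 1) => F20 i)
        = R12ᵀ * Q1ᵀ + R22ᵀ * Q2ᵀ)
    (G : Matrix (Fin u) (Fin r) ℝ) (hG : G = R12ᵀ * (R11ᵀ)⁻¹) :
    Matrix.fromCols (G * JF1 - JF2)
        (Matrix.of fun i (_ : Fin 1) => (G.mulVec F10 - F20) i) = -(R22ᵀ * Q2ᵀ) ∧
    specNorm (G * JF1 - JF2) ≤ specNorm R22 ∧
    vec2 (G.mulVec F10 - F20) ≤ specNorm R22 := by
  have hcancel : G * (R11ᵀ * Q1ᵀ) = R12ᵀ * Q1ᵀ := by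
    rw [hG, Matrix.mul_assoc, nonsing_inv_mul_cancel_left _ _ (by rwa [det_transpose])]
  set M := fromCols (G * JF1 - JF2) (of fun i (_ : Fin 1) => (G *ᵥ F10 - F20) i)
  have hM : M = -(R22ᵀ * Q2ᵀ) := by
    refine (fromCols_mul_sub_replicateCol h1 h2).trans ?_
    rw [hcancel]
    abel
  have hnorm : ‖M‖ ≤ specNorm R22 := by
    have hQ2 : Q2ᴴ * Q2 = 1 := by rwa [conjTranspose_eq_transpose_of_trivial]
    rw [hM, norm_neg, specNorm_eq_l2_opNorm, ← l2_opNorm_conjTranspose R22]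
    simpa only [conjTranspose_eq_transpose_of_trivial] using
      l2_opNorm_mul_conjTranspose_le R22ᴴ hQ2
  refine ⟨hM, ?_, ?_⟩
  · rw [specNorm_eq_l2_opNorm]
    exact (l2_opNorm_le_l2_opNorm_fromCols_left _ _).trans hnorm
  · rw [vec2_eq_norm]
    exact (norm_toLp_col_le_l2_opNorm M (Sum.inr 0)).trans hnorm

/-- from the rank-revealing factorization of (J_F(0)|F(0))ᵗ with
G = R₁₂ᵗR₁₁⁻ᵗ and d = GF₁ − F₂, one has (J_d(0)|d(0)) = −R₂₂ᵗQ₂ᵗ, hence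
‖J_d(0)‖₂ ≤ ‖R₂₂‖₂ and ‖d(0)‖₂ ≤ ‖R₂₂‖₂. -/
theorem rank_revealed_difference_matrix {n r u : ℕ}
    (JF1 : Matrix (Fin r) (Fin n) ℝ) (F10 : Fin r → ℝ)
    (JF2 : Matrix (Fin u) (Fin n) ℝ) (F20 : Fin u → ℝ)
    (Q1 : Matrix (Fin n ⊕ Fin 1) (Fin r) ℝ) (Q2 : Matrix (Fin n ⊕ Fin 1) (Fin u) ℝ)
    (R11 : Matrix (Fin r) (Fin r) ℝ) (R12 : Matrix (Fin r) (Fin u) ℝ)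
    (R22 : Matrix (Fin u) (Fin u) ℝ)
    (horth1 : Q1ᵀ * Q1 = 1) (horth2 : Q2ᵀ * Q2 = 1) (horth12 : Q1ᵀ * Q2 = 0)
    (hR11 : IsUnit R11.det)
    (h1 : Matrix.fromCols JF1 (Matrix.of fun i (_ : Fin 1) => F10 i) = R11ᵀ * Q1ᵀ)
    (h2 : Matrix.fromCols JF2 (Matrix.of fun i (_ : Fin 1) => F20 i)
        = R12ᵀ * Q1ᵀ + R22ᵀ * Q2ᵀ)
    (G : Matrix (Fin u) (Fin r) ℝ) (hG : G = R12ᵀ * (R11ᵀ)⁻¹) :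
    Matrix.fromCols (G * JF1 - JF2)
        (Matrix.of fun i (_ : Fin 1) => (G.mulVec F10 - F20) i) = -(R22ᵀ * Q2ᵀ) ∧
    specNorm (G * JF1 - JF2) ≤ specNorm R22 ∧
    vec2 (G.mulVec F10 - F20) ≤ specNorm R22 :=
  rank_revealed_difference_matrix_general JF1 F10 JF2 F20 Q1 Q2 R11 R12 R22 horth2 hR11 h1 h2 G hG
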